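/- arXiv:1709.03979 — 2 statements merged into one kernel-verified Lean document; each statement's English description precedes it below -/
import Mathlib

section
/- Let Y = UΣVᵀ be a singular value decomposition of Y ∈ ℝ^{d×m} with singular values σ₁,…,σ_r and let τ ≥ 0. Define the singular value shrinkage operator D_τ(Y) = U·diag(max(σᵢ − τ, 0))·Vᵀ. Then D_τ(Y) is the unique minimizer of X ↦ (1/2)‖Y − X‖_F² + τ‖X‖_* over all matrices X ∈ ℝ^{d×m}, where ‖X‖_* denotes the nuclear norm (sum of singular values). -/
open Matrix Finset

/-- Nuclear norm: trace of the positive semidefinite square root of `XᵀX`. -/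
noncomputable def nuclearNorm {d m : ℕ} (X : Matrix (Fin d) (Fin m) ℝ) : ℝ :=
  (((Matrix.posSemidef_conjTranspose_mul_self X).1.eigenvectorUnitary : Matrix (Fin m) (Fin m) ℝ) *
    diagonal ((fun x : ℝ => (x : ℝ)) ∘ (√·) ∘ (Matrix.posSemidef_conjTranspose_mul_self X).1.eigenvalues) *
    (star (Matrix.posSemidef_conjTranspose_mul_self X).1.eigenvectorUnitary :
      Matrix (Fin m) (Fin m) ℝ)).trace

/-!
Put `G = Y - D_τ = U diag(min(σᵢ, τ)) Vᵀ`. Then `⟨G, D_τ⟩ = τ ‖D_τ‖_*`, and `GᵀG ≼ τ²`, so by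
trace duality `⟨G, X⟩ ≤ τ ‖X‖_*` for every `X`: `G` is a subgradient of `τ ‖·‖_*` at `D_τ`.
Expanding `‖Y - X‖_F² = ‖G‖_F² + 2 ⟨G, D_τ - X⟩ + ‖D_τ - X‖_F²` gives the strict inequality.
Trace duality, `⟨W, X⟩ ≤ c ‖X‖_*` whenever `WᵀW ≼ c²`, is Cauchy–Schwarz column by column after
multiplying `W` and `X` on the right by the eigenvectors `Q` of `XᵀX`: the columns of `XQ` have
norms `√λⱼ`, those of `WQ` norms at most `c`.
-/

namespace Matrix

section Factorization

variable {R : Type*} [CommSemiring R] {α β γ ρ : Type*} [Fintype ρ] [DecidableEq ρ]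

theorem transpose_mul_diagonal_mul_transpose (L : Matrix α ρ R) (c : ρ → R)
    (M : Matrix β ρ R) : (L * diagonal c * Mᵀ)ᵀ = M * diagonal c * Lᵀ := by
  rw [transpose_mul, transpose_mul, transpose_transpose, diagonal_transpose, Matrix.mul_assoc]

theorem mul_diagonal_mul_transpose_mul_mul_diagonal_mul_transpose [Fintype β]
    (L : Matrix α ρ R) {M M' : Matrix β ρ R} (N : Matrix γ ρ R) (c e : ρ → R)
    (h : Mᵀ * M' = 1) :
    L * diagonal c * Mᵀ * (M' * diagonal e * Nᵀ) = L * diagonal (c * e) * Nᵀ := by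
  simp only [Matrix.mul_assoc]
  rw [← Matrix.mul_assoc Mᵀ, h, Matrix.one_mul, ← Matrix.mul_assoc (diagonal c),
    diagonal_mul_diagonal]
  rfl

theorem trace_mul_diagonal_mul_transpose [Fintype β] {V : Matrix β ρ R} (hV : Vᵀ * V = 1)
    (c : ρ → R) : (V * diagonal c * Vᵀ).trace = ∑ i, c i := by
  rw [trace_mul_cycle, hV, Matrix.one_mul, trace_diagonal]

end Factorization

section Frobenius

variable {R : Type*} [CommSemiring R] {m n : Type*} [Fintype m]

theorem transpose_mul_self_apply_self (A : Matrix m n R) (j : n) :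
    (Aᵀ * A) j j = ∑ i, A i j ^ 2 := by
  simp [mul_apply, sq]

theorem trace_transpose_mul_eq_sum [Fintype n] (A B : Matrix m n R) :
    (Aᵀ * B).trace = ∑ j, ∑ i, A i j * B i j := by
  simp [trace, mul_apply]

end Frobenius

theorem half_trace_add_lt_of_subgradient {m n : Type*} [Fintype m] [Fintype n]
    {f : Matrix m n ℝ → ℝ} {Y D X : Matrix m n ℝ} (hD : ((Y - D)ᵀ * D).trace = f D)
    (hX : ((Y - D)ᵀ * X).trace ≤ f X) (hne : X ≠ D) :
    1 / 2 * ((Y - D)ᵀ * (Y - D)).trace + f D < 1 / 2 * ((Y - X)ᵀ * (Y - X)).trace + f X := by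
  set G := Y - D
  set E := D - X
  have hE : 0 < (Eᵀ * E).trace :=
    (posSemidef_conjTranspose_mul_self E).trace_nonneg.lt_of_ne' <|
      trace_conjTranspose_mul_self_eq_zero_iff.not.mpr (sub_ne_zero.mpr hne.symm)
  have hexpand : ((Y - X)ᵀ * (Y - X)).trace =
      (Gᵀ * G).trace + 2 * (Gᵀ * E).trace + (Eᵀ * E).trace := by
    rw [← sub_add_sub_cancel Y D X, transpose_add, Matrix.add_mul, Matrix.mul_add,
      Matrix.mul_add, trace_add, trace_add, trace_add, ← trace_transpose (Eᵀ * G), transpose_mul,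
      transpose_transpose]
    ring
  have hGE : (Gᵀ * E).trace = f D - (Gᵀ * X).trace := by
    rw [Matrix.mul_sub, trace_sub, hD]
  linarith

section PosSemidef

variable {m ρ : Type*} [Fintype m] [Fintype ρ] [DecidableEq m] [DecidableEq ρ]

theorem posSemidef_one_sub_mul_transpose {V : Matrix m ρ ℝ} (hV : Vᵀ * V = 1) :
    (1 - V * Vᵀ).PosSemidef := by
  have hP : (1 - V * Vᵀ)ᴴ * (1 - V * Vᵀ) = 1 - V * Vᵀ := by
    rw [conjTranspose_eq_transpose_of_trivial, transpose_sub, transpose_one, transpose_mul,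
      transpose_transpose, Matrix.mul_sub, Matrix.mul_one, Matrix.sub_mul, Matrix.one_mul,
      Matrix.mul_assoc, ← Matrix.mul_assoc Vᵀ, hV, Matrix.one_mul, sub_self, sub_zero]
  exact hP ▸ posSemidef_conjTranspose_mul_self _

theorem posSemidef_smul_one_sub_mul_diagonal_mul_transpose {V : Matrix m ρ ℝ}
    (hV : Vᵀ * V = 1) {t : ℝ} (ht : 0 ≤ t) {c : ρ → ℝ} (hc : ∀ i, c i ≤ t) :
    (t • 1 - V * diagonal c * Vᵀ).PosSemidef := by
  have hsplit : t • 1 - V * diagonal c * Vᵀ =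
      t • (1 - V * Vᵀ) + V * diagonal (fun i => t - c i) * Vᵀ := by
    rw [show diagonal (fun i => t - c i) = t • (1 : Matrix ρ ρ ℝ) - diagonal c by
      ext i j; rcases eq_or_ne i j with rfl | h <;> simp [*]]
    rw [Matrix.mul_sub, Matrix.sub_mul, Matrix.mul_smul, Matrix.smul_mul, Matrix.mul_one]
    module
  rw [hsplit]
  refine ((posSemidef_one_sub_mul_transpose hV).smul ht).add ?_
  simpa using (PosSemidef.diagonal fun i => sub_nonneg.mpr (hc i)).mul_mul_conjTranspose_same V

end PosSemidef

theorem sum_sq_mul_apply_le {m n k : Type*} [Fintype m] [Fintype n] [Fintype k]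
    [DecidableEq n] [DecidableEq k] {W : Matrix m n ℝ} {Q : Matrix n k ℝ} {c : ℝ}
    (hW : (c • 1 - Wᵀ * W).PosSemidef) (hQ : Qᵀ * Q = 1) (j : k) :
    ∑ i, (W * Q) i j ^ 2 ≤ c := by
  have hconj : Qᴴ * (c • 1 - Wᵀ * W) * Q = c • 1 - (W * Q)ᵀ * (W * Q) := by
    rw [conjTranspose_eq_transpose_of_trivial, Matrix.mul_sub, Matrix.sub_mul, Matrix.mul_smul,
      Matrix.smul_mul, Matrix.mul_one, hQ, transpose_mul]
    simp only [Matrix.mul_assoc]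
  have hdiag := (hW.conjTranspose_mul_mul_same Q).diag_nonneg (i := j)
  rw [hconj, sub_apply, smul_apply, one_apply_eq, transpose_mul_self_apply_self] at hdiag
  simpa using hdiag

theorem IsHermitian.cfc_sqrt_eq_of_sq_eq {n : Type*} [Fintype n] [DecidableEq n]
    {A B : Matrix n n ℝ} (hA : A.IsHermitian) (hB : B.PosSemidef) (h : B ^ 2 = A) :
    hA.cfc Real.sqrt = B := by
  have hspec := (posSemidef_iff_isHermitian_and_spectrum_nonneg.mp hB).2
  rw [← hA.cfc_eq, ← h, ← cfc_comp_pow Real.sqrt 2 B (hf := Real.continuous_sqrt.continuousOn)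
    (ha := hB.1.isSelfAdjoint)]
  exact (cfc_congr fun x hx => Real.sqrt_sq (hspec hx)).trans (cfc_id ℝ B hB.1.isSelfAdjoint)

end Matrix

section NuclearNorm

variable {d m : ℕ}

theorem nuclearNorm_eq_sum_sqrt_eigenvalues (X : Matrix (Fin d) (Fin m) ℝ) :
    nuclearNorm X = ∑ j, √((posSemidef_conjTranspose_mul_self X).1.eigenvalues j) := by
  rw [nuclearNorm, trace_mul_cycle, Unitary.coe_star_mul_self, Matrix.one_mul, trace_diagonal]
  rfl

theorem nuclearNorm_eq_trace_of_sq_eq {X : Matrix (Fin d) (Fin m) ℝ}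
    {B : Matrix (Fin m) (Fin m) ℝ} (hB : B.PosSemidef) (h : B ^ 2 = Xᵀ * X) :
    nuclearNorm X = B.trace := by
  have hXX := (posSemidef_conjTranspose_mul_self X).1
  rw [← hXX.cfc_sqrt_eq_of_sq_eq hB h, nuclearNorm, IsHermitian.cfc,
    Unitary.conjStarAlgAut_apply]
  rfl

theorem nuclearNorm_mul_diagonal_mul_transpose {r : ℕ} {U : Matrix (Fin d) (Fin r) ℝ}
    {V : Matrix (Fin m) (Fin r) ℝ} (hU : Uᵀ * U = 1) (hV : Vᵀ * V = 1) {c : Fin r → ℝ}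
    (hc : ∀ i, 0 ≤ c i) : nuclearNorm (U * diagonal c * Vᵀ) = ∑ i, c i := by
  refine (nuclearNorm_eq_trace_of_sq_eq (B := V * diagonal c * Vᵀ) ?_ ?_).trans
    (trace_mul_diagonal_mul_transpose hV c)
  · simpa using (PosSemidef.diagonal hc).mul_mul_conjTranspose_same V
  · rw [sq, transpose_mul_diagonal_mul_transpose,
      mul_diagonal_mul_transpose_mul_mul_diagonal_mul_transpose _ _ _ _ hV,
      mul_diagonal_mul_transpose_mul_mul_diagonal_mul_transpose _ _ _ _ hU]

theorem sum_sq_mul_eigenvectorUnitary_apply (X : Matrix (Fin d) (Fin m) ℝ) (j : Fin m) :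
    ∑ i, (X * ((posSemidef_conjTranspose_mul_self X).1.eigenvectorUnitary :
      Matrix (Fin m) (Fin m) ℝ)) i j ^ 2 =
      (posSemidef_conjTranspose_mul_self X).1.eigenvalues j := by
  set hXX := (posSemidef_conjTranspose_mul_self X).1
  have hdiag := congrFun₂ hXX.conjStarAlgAut_star_eigenvectorUnitary j j
  rw [Unitary.conjStarAlgAut_star_apply] at hdiag
  rw [← transpose_mul_self_apply_self, transpose_mul]
  simpa [Matrix.mul_assoc, star_eq_conjTranspose] using hdiag

theorem trace_transpose_mul_le_mul_nuclearNorm (X W : Matrix (Fin d) (Fin m) ℝ) {c : ℝ}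
    (hc : 0 ≤ c) (hW : (c ^ 2 • 1 - Wᵀ * W).PosSemidef) :
    (Wᵀ * X).trace ≤ c * nuclearNorm X := by
  set hXX := (posSemidef_conjTranspose_mul_self X).1
  set Q : Matrix (Fin m) (Fin m) ℝ := ↑hXX.eigenvectorUnitary
  have hQ : Qᵀ * Q = 1 := Unitary.coe_star_mul_self hXX.eigenvectorUnitary
  have hQ' : Q * Qᵀ = 1 := Unitary.coe_mul_star_self hXX.eigenvectorUnitary
  calc (Wᵀ * X).trace = ((W * Q)ᵀ * (X * Q)).trace := by
        rw [transpose_mul, Matrix.mul_assoc, ← Matrix.mul_assoc Wᵀ, trace_mul_comm Qᵀ,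
          Matrix.mul_assoc, hQ', Matrix.mul_one]
    _ = ∑ j, ∑ i, (W * Q) i j * (X * Q) i j := trace_transpose_mul_eq_sum _ _
    _ ≤ ∑ j, √(∑ i, (W * Q) i j ^ 2) * √(∑ i, (X * Q) i j ^ 2) :=
        sum_le_sum fun j _ => Real.sum_mul_le_sqrt_mul_sqrt _ _ _
    _ ≤ ∑ j, c * √(hXX.eigenvalues j) := by
        gcongr with j
        · exact (Real.sqrt_le_sqrt (sum_sq_mul_apply_le hW hQ j)).trans_eq (Real.sqrt_sq hc)
        · exact (sum_sq_mul_eigenvectorUnitary_apply X j).le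
    _ = c * nuclearNorm X := by rw [nuclearNorm_eq_sum_sqrt_eigenvalues, mul_sum]

end NuclearNorm

theorem singular_value_thresholding (d m r : ℕ)
    (Y : Matrix (Fin d) (Fin m) ℝ)
    (U : Matrix (Fin d) (Fin r) ℝ) (V : Matrix (Fin m) (Fin r) ℝ)
    (hU : Uᵀ * U = 1) (hV : Vᵀ * V = 1)
    (σ : Fin r → ℝ) (hσ : ∀ i, 0 ≤ σ i)
    (hY : Y = U * Matrix.diagonal σ * Vᵀ)
    (τ : ℝ) (hτ : 0 ≤ τ)
    (Dτ : Matrix (Fin d) (Fin m) ℝ)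
    (hDτ : Dτ = U * Matrix.diagonal (fun i => max (σ i - τ) 0) * Vᵀ) :
    ∀ X : Matrix (Fin d) (Fin m) ℝ, X ≠ Dτ →
      (1/2) * ((Y - Dτ)ᵀ * (Y - Dτ)).trace + τ * nuclearNorm Dτ <
      (1/2) * ((Y - X)ᵀ * (Y - X)).trace + τ * nuclearNorm X := by
  intro X hX
  set g : Fin r → ℝ := fun i => min (σ i) τ
  have hG : Y - Dτ = U * diagonal g * Vᵀ := by
    rw [hY, hDτ, ← Matrix.sub_mul, ← Matrix.mul_sub, diagonal_sub]
    congr 3 with i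
    rcases le_total (σ i) τ with h | h <;> simp [g, h]
  refine half_trace_add_lt_of_subgradient (f := fun X => τ * nuclearNorm X) ?_ ?_ hX
  · rw [hG, hDτ, transpose_mul_diagonal_mul_transpose,
      mul_diagonal_mul_transpose_mul_mul_diagonal_mul_transpose _ _ _ _ hU,
      trace_mul_diagonal_mul_transpose hV,
      nuclearNorm_mul_diagonal_mul_transpose hU hV fun i => le_max_right _ _, mul_sum]
    refine sum_congr rfl fun i _ => ?_
    rcases le_total (σ i) τ with h | h <;> simp [g, h]
  · refine trace_transpose_mul_le_mul_nuclearNorm X _ hτ ?_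
    rw [hG, transpose_mul_diagonal_mul_transpose,
      mul_diagonal_mul_transpose_mul_mul_diagonal_mul_transpose _ _ _ _ hU]
    refine posSemidef_smul_one_sub_mul_diagonal_mul_transpose hV (sq_nonneg τ) fun i => ?_
    have hg : 0 ≤ g i := le_min (hσ i) hτ
    simpa [sq] using mul_self_le_mul_self hg (min_le_right (σ i) τ)
end

section
/- Let 0 < p < 1 and w > 0. Consider h(x) = (1/2)(x − γ)² + w·x^p on x ∈ [0, ∞) for γ > 0, and define the threshold τ_p(w) = (2w(1−p))^{1/(2−p)} + w·p·(2w(1−p))^{(p−1)/(2−p)}. If γ < τ_p(w), then x = 0 is the unique global minimizer of h. If γ > τ_p(w), there exists a nonzero x* > 0 with h(x*) < h(0), satisfying the stationarity condition x* − γ + w·p·(x*)^{p−1} = 0. -/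
/-!
For `x > 0` we have `h x - h 0 = x * (x / 2 + w * x ^ (p - 1) - γ)`, and the convex function
`x / 2 + w * x ^ (p - 1)` attains its minimum `τ_p(w)` at `a = (2w(1-p))^{1/(2-p)}` (Bernoulli's
inequality for the exponent `p - 1 ∈ (-1, 0)`). So `γ < τ_p(w)` forces `h x > h 0` for all `x > 0`.
If `γ > τ_p(w)`, the stationarity equation `x + w p x ^ (p - 1) = γ` has a root `x > a` by the
intermediate value theorem, and for `x > a` its left side exceeds `x / 2 + w * x ^ (p - 1)`, so
`h x < h 0` there.
-/

noncomputable def gstThreshold (p w : ℝ) : ℝ :=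
  (2*w*(1-p)) ^ ((1:ℝ)/(2-p)) + w * p * (2*w*(1-p)) ^ ((p-1)/(2-p))

open Real Set

/-- Bernoulli's inequality for exponents in `[-1, 0]`, reduced to the concave case via
`y⁻¹ ≥ 2 - y`. -/
theorem one_sub_mul_self_le_rpow_neg_one_add {s : ℝ} (hs : -1 < s) {r : ℝ} (hr0 : 0 ≤ r)
    (hr1 : r ≤ 1) : 1 - r * s ≤ (1 + s) ^ (-r) := by
  set y := (1 + s) ^ r
  have hy : 0 < y := rpow_pos_of_pos (by linarith) r
  have hy_le : y ≤ 1 + r * s := rpow_one_add_le_one_add_mul_self hs.le hr0 hr1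
  have two_sub_le_inv : 2 - y ≤ y⁻¹ := by
    have : y⁻¹ - (2 - y) = (y - 1) ^ 2 / y := by field_simp; ring
    linarith [show 0 ≤ (y - 1) ^ 2 / y by positivity]
  rw [rpow_neg (by linarith)]
  linarith

theorem rpow_two_sub_mul_rpow_sub_one {x : ℝ} (hx : 0 < x) (p : ℝ) :
    x ^ (2 - p) * x ^ (p - 1) = x := by
  rw [← rpow_add hx]
  norm_num

/-- The nonzero stationary point of `h` at `γ = gstThreshold p w`; it minimizes
`x / 2 + w * x ^ (p - 1)` on `x > 0`. -/
noncomputable def gstTiePoint (p w : ℝ) : ℝ :=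
  (2*w*(1-p)) ^ ((1:ℝ)/(2-p))

section GST

variable {p w : ℝ}

theorem gstTiePoint_pos (hp1 : p < 1) (hw : 0 < w) : 0 < gstTiePoint p w :=
  rpow_pos_of_pos (by nlinarith) _

theorem gstTiePoint_rpow_two_sub (hp1 : p < 1) (hw : 0 ≤ w) :
    gstTiePoint p w ^ (2 - p) = 2 * w * (1 - p) := by
  rw [gstTiePoint, ← rpow_mul (by nlinarith), one_div, inv_mul_cancel₀ (by linarith), rpow_one]

theorem gstThreshold_eq_gstTiePoint_add (hp1 : p < 1) (hw : 0 ≤ w) :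
    gstThreshold p w = gstTiePoint p w + w * p * gstTiePoint p w ^ (p - 1) := by
  rw [gstThreshold, gstTiePoint, ← rpow_mul (by nlinarith)]
  congr 3
  field_simp

theorem gstThreshold_eq_half_add (hp1 : p < 1) (hw : 0 < w) :
    gstThreshold p w = gstTiePoint p w / 2 + w * gstTiePoint p w ^ (p - 1) := by
  have hcrit := rpow_two_sub_mul_rpow_sub_one (gstTiePoint_pos hp1 hw) p
  rw [gstTiePoint_rpow_two_sub hp1 hw.le] at hcrit
  rw [gstThreshold_eq_gstTiePoint_add hp1 hw.le]
  linear_combination -hcrit / 2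

theorem gstThreshold_le_half_add (hp : 0 ≤ p) (hp1 : p < 1) (hw : 0 < w) {x : ℝ} (hx : 0 < x) :
    gstThreshold p w ≤ x / 2 + w * x ^ (p - 1) := by
  set a := gstTiePoint p w
  have ha : 0 < a := gstTiePoint_pos hp1 hw
  set t := x / a
  have hxt : x = a * t := by simp only [t]; field_simp
  have hcrit := rpow_two_sub_mul_rpow_sub_one ha p
  rw [gstTiePoint_rpow_two_sub hp1 hw.le] at hcrit
  have hbernoulli : 1 - (1 - p) * (t - 1) ≤ t ^ (p - 1) := by
    have ht : 0 < t := by positivity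
    have := one_sub_mul_self_le_rpow_neg_one_add (s := t - 1) (by linarith)
      (r := 1 - p) (by linarith) (by linarith)
    rwa [add_sub_cancel, neg_sub] at this
  have hA : 0 ≤ w * a ^ (p - 1) := by positivity
  rw [gstThreshold_eq_half_add hp1 hw, hxt, mul_rpow ha.le (by positivity)]
  nlinarith [mul_le_mul_of_nonneg_left hbernoulli hA]

theorem half_add_lt_of_gstTiePoint_lt (hp1 : p < 1) (hw : 0 < w) {x : ℝ}
    (hx : gstTiePoint p w < x) : x / 2 + w * x ^ (p - 1) < x + w * p * x ^ (p - 1) := by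
  have ha := gstTiePoint_pos hp1 hw
  have hx0 : 0 < x := ha.trans hx
  have hpow : 2 * w * (1 - p) < x ^ (2 - p) := by
    rw [← gstTiePoint_rpow_two_sub hp1 hw.le]
    exact rpow_lt_rpow ha.le hx (by linarith)
  have hmul := mul_lt_mul_of_pos_right hpow (rpow_pos_of_pos hx0 (p - 1))
  rw [rpow_two_sub_mul_rpow_sub_one hx0] at hmul
  linarith

theorem exists_stationary_gt_gstTiePoint (hp : 0 ≤ p) (hp1 : p < 1) (hw : 0 < w) {γ : ℝ}
    (hγ : gstThreshold p w < γ) :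
    ∃ x, gstTiePoint p w < x ∧ x + w * p * x ^ (p - 1) = γ := by
  set a := gstTiePoint p w
  have ha : 0 < a := gstTiePoint_pos hp1 hw
  set f : ℝ → ℝ := fun x ↦ x + w * p * x ^ (p - 1)
  have hfa : f a = gstThreshold p w := (gstThreshold_eq_gstTiePoint_add hp1 hw.le).symm
  have haγ : a ≤ γ := by
    have : 0 ≤ w * p * a ^ (p - 1) := by positivity
    linarith
  have hfγ : γ ≤ f γ := by
    have hγ0 : 0 < γ := ha.trans_le haγ
    have : 0 ≤ w * p * γ ^ (p - 1) := by positivity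
    simp only [f]
    linarith
  have hcont : ContinuousOn f (Icc a γ) :=
    continuousOn_id.add <| continuousOn_const.mul <|
      continuousOn_id.rpow_const fun x hx ↦ Or.inl (ha.trans_le hx.1).ne'
  obtain ⟨x, hx, hfx⟩ := intermediate_value_Icc haγ hcont ⟨hfa ▸ hγ.le, hfγ⟩
  refine ⟨x, lt_of_le_of_ne hx.1 ?_, hfx⟩
  rintro rfl
  exact hγ.ne (hfa ▸ hfx)

end GST

theorem gst_threshold_characterization_general (p w γ : ℝ)
    (hp : 0 < p) (hp1 : p < 1) (hw : 0 < w)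
    (h : ℝ → ℝ) (hh : ∀ x, h x = (1/2) * (x - γ)^2 + w * x ^ p) :
    (γ < gstThreshold p w → ∀ x : ℝ, 0 < x → h 0 < h x) ∧
    (gstThreshold p w < γ →
      ∃ x : ℝ, 0 < x ∧ h x < h 0 ∧ x - γ + w * p * x ^ (p - 1) = 0) := by
  have hdiff : ∀ x, 0 < x → h x - h 0 = x * (x / 2 + w * x ^ (p - 1) - γ) := by
    intro x hx
    rw [hh, hh, zero_rpow hp.ne', rpow_sub_one hx.ne']
    field_simp
    ring
  refine ⟨fun hlt x hx ↦ ?_, fun hgt ↦ ?_⟩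
  · have := gstThreshold_le_half_add hp.le hp1 hw hx
    nlinarith [hdiff x hx]
  · obtain ⟨x, hax, hstat⟩ := exists_stationary_gt_gstTiePoint hp.le hp1 hw hgt
    have hx : 0 < x := (gstTiePoint_pos hp1 hw).trans hax
    have := half_add_lt_of_gstTiePoint_lt hp1 hw hax
    exact ⟨x, hx, by nlinarith [hdiff x hx], by linarith⟩

theorem gst_threshold_characterization (p w γ : ℝ)
    (hp : 0 < p) (hp1 : p < 1) (hw : 0 < w) (hγ : 0 < γ)
    (h : ℝ → ℝ) (hh : ∀ x, h x = (1/2) * (x - γ)^2 + w * x ^ p) :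
    (γ < gstThreshold p w → ∀ x : ℝ, 0 < x → h 0 < h x) ∧
    (gstThreshold p w < γ →
      ∃ x : ℝ, 0 < x ∧ h x < h 0 ∧ x - γ + w * p * x ^ (p - 1) = 0) :=
  gst_threshold_characterization_general p w γ hp hp1 hw h hh
end
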